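/- Let θ be a stability parameter with θ_i ≤ 0 for all i < q. Then a θ-stable finite graded algebra A (graded in [0,q]) has no non-zero two-sided ideal I with I_q = 0. -/

import Mathlib

/-! Use the family `I^(k) = J ∩ A_{≥k}`. For `x ∈ J` with degree-`0` part `c • 1` and
`0 ≠ a ∈ A_q`, the product `x * a = c • a` lies in `J ∩ A_q = 0` (as `A_{≥q+1} = 0`), so `c = 0`
and `J ⊆ A_{≥1}`: the family is non-trivial, and it does not dominate `(A_{≥k})_k` because
`A_q ⊄ J`. Its weight in degree `q` vanishes, and `θ_i ≤ 0` below `q`, so `Σ θ_i w_i ≤ 0`,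
contradicting θ-stability. -/

open Module

variable {A : Type*}

/-- `A_{≥n}`: the sum of the graded pieces of degree at least `n`. -/
def Ageq [Ring A] [Algebra ℂ A] (𝒜 : ℕ → Submodule ℂ A) (n : ℕ) : Submodule ℂ A :=
  ⨆ i ∈ Set.Ici n, 𝒜 i

/-- An admissible family of two-sided ideals `A ⊇ I^(1) ⊇ I^(2) ⊇ …` with
`I^(k)·I^(ℓ) ⊆ I^(k+ℓ)`, vanishing eventually in each degree. -/
structure AdmissibleFamily [Ring A] [Algebra ℂ A] (𝒜 : ℕ → Submodule ℂ A)
    (I : ℕ → Submodule ℂ A) : Prop where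
  ideal_left : ∀ k, 1 ≤ k → ∀ a : A, ∀ x ∈ I k, a * x ∈ I k
  ideal_right : ∀ k, 1 ≤ k → ∀ a : A, ∀ x ∈ I k, x * a ∈ I k
  descending : ∀ k, 1 ≤ k → I (k + 1) ≤ I k
  mul_mem : ∀ k l, 1 ≤ k → 1 ≤ l → ∀ x ∈ I k, ∀ y ∈ I l, x * y ∈ I (k + l)
  eventually_zero : ∀ i, ∃ l, ∀ k, l ≤ k → I k ⊓ 𝒜 i = ⊥

/-- The family `I` dominates the tautological family `(A_{≥k})_k`. -/
def Dominates [Ring A] [Algebra ℂ A] (𝒜 I : ℕ → Submodule ℂ A) : Prop :=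
  ∀ k, 1 ≤ k → Ageq 𝒜 k ≤ I k

/-- The weight `w_i = Σ_{k≥1} dim I^(k)_i` of an admissible family of ideals,
computed with a cutoff `L` beyond which all `I^(k)_i` vanish. -/
noncomputable def weight [Ring A] [Algebra ℂ A] (𝒜 I : ℕ → Submodule ℂ A)
    (L i : ℕ) : ℕ :=
  ∑ k ∈ Finset.Icc 1 L, finrank ℂ ↥(I k ⊓ 𝒜 i)

/-- `A` is θ-stable: `Σ θ_i w_i > 0` for every non-trivial standard admissible
family of ideals (one not dominating the tautological family). -/
def ThetaStable [Ring A] [Algebra ℂ A] (𝒜 : ℕ → Submodule ℂ A) (q : ℕ)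
    (θ : ℕ → ℤ) : Prop :=
  ∀ I : ℕ → Submodule ℂ A, AdmissibleFamily 𝒜 I → I 1 ≠ ⊥ → ¬ Dominates 𝒜 I →
    ∀ L : ℕ, (∀ k, L ≤ k → ∀ i, I k ⊓ 𝒜 i = ⊥) →
      0 < ∑ i ∈ Finset.Icc 1 q, θ i * (weight 𝒜 I L i : ℤ)

/-- `A` is θ-semi-stable: `Σ θ_i w_i ≥ 0` for every non-trivial standard
admissible family of ideals. -/
def ThetaSemiStable [Ring A] [Algebra ℂ A] (𝒜 : ℕ → Submodule ℂ A) (q : ℕ)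
    (θ : ℕ → ℤ) : Prop :=
  ∀ I : ℕ → Submodule ℂ A, AdmissibleFamily 𝒜 I → I 1 ≠ ⊥ → ¬ Dominates 𝒜 I →
    ∀ L : ℕ, (∀ k, L ≤ k → ∀ i, I k ⊓ 𝒜 i = ⊥) →
      0 ≤ ∑ i ∈ Finset.Icc 1 q, θ i * (weight 𝒜 I L i : ℤ)


section Grading

variable [Ring A] [Algebra ℂ A] (𝒜 : ℕ → Submodule ℂ A)

theorem le_Ageq {n i : ℕ} (h : n ≤ i) : 𝒜 i ≤ Ageq 𝒜 n :=
  le_iSup₂ (f := fun i (_ : i ∈ Set.Ici n) => 𝒜 i) i h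

theorem Ageq_antitone : Antitone (Ageq 𝒜) :=
  fun _ _ h => iSup₂_le fun _ hi => le_Ageq 𝒜 (h.trans hi)

theorem Ageq_eq_bot {n : ℕ} (h : ∀ i, n ≤ i → 𝒜 i = ⊥) : Ageq 𝒜 n = ⊥ :=
  le_bot_iff.1 <| iSup₂_le fun i hi => (h i hi).le

theorem Ageq_mul_le [SetLike.GradedMonoid 𝒜] (k l : ℕ) :
    Ageq 𝒜 k * Ageq 𝒜 l ≤ Ageq 𝒜 (k + l) := by
  simp only [Ageq, Submodule.iSup_mul, Submodule.mul_iSup]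
  refine iSup₂_le fun j hj => iSup₂_le fun i hi => ?_
  exact (Submodule.mul_le.2 fun a ha b hb => SetLike.mul_mem_graded ha hb).trans
    (le_Ageq 𝒜 (add_le_add hi hj))

theorem Ageq_zero [DirectSum.Decomposition 𝒜] : Ageq 𝒜 0 = ⊤ :=
  eq_top_iff.2 <| (DirectSum.Decomposition.isInternal 𝒜).submodule_iSup_eq_top.ge.trans <|
    iSup_le fun i => le_Ageq 𝒜 (Nat.zero_le i)

theorem disjoint_Ageq_of_lt [DirectSum.Decomposition 𝒜] {i k : ℕ} (h : i < k) :
    Disjoint (𝒜 i) (Ageq 𝒜 k) :=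
  (DirectSum.Decomposition.isInternal 𝒜).submodule_iSupIndep.disjoint_biSup
    (Set.notMem_Ici.2 h)

theorem sub_decompose_zero_mem_Ageq_one [DirectSum.Decomposition 𝒜] (x : A) :
    x - (DirectSum.decompose 𝒜 x 0 : A) ∈ Ageq 𝒜 1 := by
  induction x using DirectSum.Decomposition.inductionOn 𝒜 with
  | zero => simp
  | @homogeneous i x =>
    obtain ⟨x, hi⟩ := x
    rcases Nat.eq_zero_or_pos i with rfl | hpos
    · simp [DirectSum.decompose_of_mem_same 𝒜 hi]
    · simpa [DirectSum.decompose_of_mem_ne 𝒜 hi hpos.ne'] using le_Ageq 𝒜 hpos hi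
  | add x y hx hy =>
    simpa [add_sub_add_comm] using add_mem hx hy

variable [GradedRing 𝒜]

theorem mul_mem_Ageq_left (a : A) {k : ℕ} {x : A} (hx : x ∈ Ageq 𝒜 k) : a * x ∈ Ageq 𝒜 k := by
  simpa using Ageq_mul_le 𝒜 0 k (Submodule.mul_mem_mul (Ageq_zero 𝒜 ▸ Submodule.mem_top) hx)

theorem mul_mem_Ageq_right (a : A) {k : ℕ} {x : A} (hx : x ∈ Ageq 𝒜 k) : x * a ∈ Ageq 𝒜 k := by
  simpa using Ageq_mul_le 𝒜 k 0 (Submodule.mul_mem_mul hx (Ageq_zero 𝒜 ▸ Submodule.mem_top))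

theorem le_Ageq_one_of_inf_eq_bot (hconn : 𝒜 0 = Submodule.span ℂ {1}) {q : ℕ}
    (hbound : Ageq 𝒜 (q + 1) = ⊥) (hq : 𝒜 q ≠ ⊥) {J : Submodule ℂ A}
    (hright : ∀ a : A, ∀ x ∈ J, x * a ∈ J) (htop : J ⊓ 𝒜 q = ⊥) : J ≤ Ageq 𝒜 1 := by
  intro x hx
  obtain ⟨a, ha, ha0⟩ := Submodule.exists_mem_ne_zero_of_ne_bot hq
  have h0 : (DirectSum.decompose 𝒜 x 0 : A) ∈ Submodule.span ℂ {1} :=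
    hconn ▸ (DirectSum.decompose 𝒜 x 0).2
  obtain ⟨c, hc⟩ := Submodule.mem_span_singleton.1 h0
  have hy : x - c • 1 ∈ Ageq 𝒜 1 := hc ▸ sub_decompose_zero_mem_Ageq_one 𝒜 x
  have hya : (x - c • 1) * a = 0 := by
    simpa [add_comm 1 q, hbound] using
      Ageq_mul_le 𝒜 1 q (Submodule.mul_mem_mul hy (le_Ageq 𝒜 le_rfl ha))
  have hxa : x * a = c • a := by
    rwa [sub_mul, smul_mul_assoc, one_mul, sub_eq_zero] at hya
  have hca : c • a ∈ J ⊓ 𝒜 q := ⟨hxa ▸ hright a x hx, (𝒜 q).smul_mem c ha⟩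
  rw [htop, Submodule.mem_bot, smul_eq_zero] at hca
  have hc0 : c = 0 := hca.resolve_right ha0
  simpa [hc0] using hy

theorem admissibleFamily_inf_Ageq {J : Submodule ℂ A} (hleft : ∀ a : A, ∀ x ∈ J, a * x ∈ J)
    (hright : ∀ a : A, ∀ x ∈ J, x * a ∈ J) :
    AdmissibleFamily 𝒜 fun k => J ⊓ Ageq 𝒜 k where
  ideal_left _ _ a _ hx := ⟨hleft a _ hx.1, mul_mem_Ageq_left 𝒜 a hx.2⟩
  ideal_right _ _ a _ hx := ⟨hright a _ hx.1, mul_mem_Ageq_right 𝒜 a hx.2⟩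
  descending k _ := inf_le_inf_left J (Ageq_antitone 𝒜 k.le_succ)
  mul_mem k l _ _ x hx y hy :=
    ⟨hright y x hx.1, Ageq_mul_le 𝒜 k l (Submodule.mul_mem_mul hx.2 hy.2)⟩
  eventually_zero i := ⟨i + 1, fun _ hk => eq_bot_iff.2 fun _ hx =>
    (disjoint_Ageq_of_lt 𝒜 (Nat.lt_of_succ_le hk)).le_bot ⟨hx.2, hx.1.2⟩⟩

end Grading

theorem weight_eq_zero [Ring A] [Algebra ℂ A] {𝒜 I : ℕ → Submodule ℂ A} {i : ℕ}
    (h : ∀ k, I k ⊓ 𝒜 i = ⊥) (L : ℕ) : weight 𝒜 I L i = 0 :=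
  Finset.sum_eq_zero fun k _ => by rw [h k, finrank_bot]

theorem sum_theta_mul_weight_nonpos [Ring A] [Algebra ℂ A] {𝒜 I : ℕ → Submodule ℂ A}
    {θ : ℕ → ℤ} {q L : ℕ} (hθ : ∀ i, 1 ≤ i → i < q → θ i ≤ 0) (hq : weight 𝒜 I L q = 0) :
    ∑ i ∈ Finset.Icc 1 q, θ i * (weight 𝒜 I L i : ℤ) ≤ 0 := by
  refine Finset.sum_nonpos fun i hi => ?_
  obtain ⟨hi1, hiq⟩ := Finset.mem_Icc.1 hi
  rcases hiq.lt_or_eq with hlt | rfl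
  · exact mul_nonpos_of_nonpos_of_nonneg (hθ i hi1 hlt) (Int.natCast_nonneg _)
  · simp [hq]

theorem theta_stable_no_ideal_vanishing_in_top_degree_general [Ring A] [Algebra ℂ A]
    (𝒜 : ℕ → Submodule ℂ A) [GradedAlgebra 𝒜]
    (q : ℕ) (hq : 1 ≤ q) (hbound : ∀ i, q < i → 𝒜 i = ⊥)
    (hconn : 𝒜 0 = Submodule.span ℂ {1})
    (hdpos : ∀ i, 1 ≤ i → i ≤ q → 0 < finrank ℂ ↥(𝒜 i))
    (θ : ℕ → ℤ)
    (hθ : ∀ i, 1 ≤ i → i < q → θ i ≤ 0)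
    (hstable : ThetaStable 𝒜 q θ) :
    ∀ J : Submodule ℂ A,
      (∀ a : A, ∀ x ∈ J, a * x ∈ J) → (∀ a : A, ∀ x ∈ J, x * a ∈ J) →
      J ⊓ 𝒜 q = ⊥ → J = ⊥ := by
  intro J hleft hright htop
  by_contra hJ
  have hAq : 𝒜 q ≠ ⊥ :=
    Submodule.nontrivial_iff_ne_bot.1 (Module.nontrivial_of_finrank_pos (hdpos q hq le_rfl))
  have hvanish : Ageq 𝒜 (q + 1) = ⊥ := Ageq_eq_bot 𝒜 hbound
  have hJ1 : J ≤ Ageq 𝒜 1 := le_Ageq_one_of_inf_eq_bot 𝒜 hconn hvanish hAq hright htop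
  set I : ℕ → Submodule ℂ A := fun k => J ⊓ Ageq 𝒜 k
  have hI : ∀ k, q + 1 ≤ k → ∀ i, I k ⊓ 𝒜 i = ⊥ := fun k hk i =>
    eq_bot_iff.2 fun x hx => by simpa [hvanish] using Ageq_antitone 𝒜 hk hx.1.2
  have hndom : ¬ Dominates 𝒜 I := fun hdom =>
    have hAqJ : 𝒜 q ≤ J := (le_Ageq 𝒜 le_rfl).trans ((hdom q hq).trans inf_le_left)
    hAq (le_bot_iff.1 (htop ▸ le_inf hAqJ le_rfl))
  have hIq : ∀ k, I k ⊓ 𝒜 q = ⊥ := fun k => eq_bot_iff.2 (htop ▸ inf_le_inf_right _ inf_le_left)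
  exact (hstable I (admissibleFamily_inf_Ageq 𝒜 hleft hright) (by simpa [I, hJ1] using hJ) hndom
    (q + 1) hI).not_ge (sum_theta_mul_weight_nonpos hθ (weight_eq_zero hIq _))

/-- if `θ_i ≤ 0` for all `i < q`, then a θ-stable finite graded
algebra `A` (graded in `[0,q]`) has no non-zero two-sided ideal `I` with
`I_q = I ∩ A_q = 0`. -/
theorem theta_stable_no_ideal_vanishing_in_top_degree [Ring A] [Algebra ℂ A]
    (𝒜 : ℕ → Submodule ℂ A) [GradedAlgebra 𝒜] [∀ i, FiniteDimensional ℂ ↥(𝒜 i)]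
    (q : ℕ) (hq : 1 ≤ q) (hbound : ∀ i, q < i → 𝒜 i = ⊥)
    (hconn : 𝒜 0 = Submodule.span ℂ {1})
    (hdpos : ∀ i, 1 ≤ i → i ≤ q → 0 < finrank ℂ ↥(𝒜 i))
    (θ : ℕ → ℤ)
    (hparam1 : ∑ i ∈ Finset.Icc 1 q, θ i * (finrank ℂ ↥(𝒜 i) : ℤ) < 0)
    (hparam2 : ∑ i ∈ Finset.Icc 1 q, (i : ℤ) * θ i * (finrank ℂ ↥(𝒜 i) : ℤ) = 0)
    (hθ : ∀ i, 1 ≤ i → i < q → θ i ≤ 0)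
    (hstable : ThetaStable 𝒜 q θ) :
    ∀ J : Submodule ℂ A,
      (∀ a : A, ∀ x ∈ J, a * x ∈ J) → (∀ a : A, ∀ x ∈ J, x * a ∈ J) →
      J ⊓ 𝒜 q = ⊥ → J = ⊥ :=
  theta_stable_no_ideal_vanishing_in_top_degree_general 𝒜 q hq hbound hconn hdpos θ hθ hstable
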